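/- Let H > 0, let f : [0,H] → ℂ be continuous, and let ε > 0. Then there exists a polynomial P with complex coefficients such that |f(t) − P(t)| < ε for all t ∈ [0,H] and |P'(t)| ≥ 1 for all t ∈ [0,H], where P' is the derivative of P. -/

import Mathlib

open Polynomial Finset Filter

/-- Truncated Taylor polynomial for `exp (a • X)`. -/
noncomputable def expPoly (a : ℂ) (n : ℕ) : Polynomial ℂ :=
  ∑ k ∈ Finset.range n, Polynomial.C (a ^ k / k.factorial) * Polynomial.X ^ k

lemma expPoly_eval (a : ℂ) (n : ℕ) (t : ℂ) :
    (expPoly a n).eval t = ∑ k ∈ Finset.range n, a ^ k * t ^ k / k.factorial := by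
  rw [expPoly, Polynomial.eval_finset_sum]
  refine Finset.sum_congr rfl fun k _ => ?_
  simp [div_mul_eq_mul_div]

lemma expPoly_derivative (a : ℂ) (n : ℕ) :
    (expPoly a (n + 1)).derivative = Polynomial.C a * expPoly a n := by
  rw [expPoly, Polynomial.derivative_sum, Finset.sum_range_succ']
  simp only [Polynomial.derivative_C_mul, Polynomial.derivative_X_pow]
  rw [expPoly, Finset.mul_sum]
  simp only [pow_zero, Nat.cast_zero, mul_zero, zero_mul, Polynomial.C_0, add_zero,
    Nat.add_sub_cancel, Nat.cast_add, Nat.cast_one]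
  refine Finset.sum_congr rfl fun k _ => ?_
  rw [← mul_assoc, ← mul_assoc, ← Polynomial.C_mul, ← Polynomial.C_mul]
  congr 1
  rw [Nat.factorial_succ]
  have hk : ((k.factorial : ℂ)) ≠ 0 := by exact_mod_cast k.factorial_ne_zero
  have hk1 : ((k : ℂ) + 1) ≠ 0 := Nat.cast_add_one_ne_zero k
  push_cast
  field_simp
  ring

/-- Tail bound: the truncated Taylor polynomial is close to `exp (a * t)`. -/
lemma expPoly_close (a : ℂ) (n : ℕ) (t : ℂ) (c : ℝ) (hc : ‖a * t‖ ≤ c) :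
    ‖Complex.exp (a * t) - (expPoly a n).eval t‖
      ≤ ∑' k : ℕ, c ^ (k + n) / (k + n).factorial := by
  have hc0 : 0 ≤ c := le_trans (norm_nonneg _) hc
  have hc' : ‖a * t‖ ≤ c := by exact hc
  have hsum : Summable (fun k : ℕ => (a * t) ^ k / k.factorial) := by
    apply Summable.of_norm
    apply Summable.of_nonneg_of_le (fun k => norm_nonneg _)
      (fun k => ?_) (Real.summable_pow_div_factorial c)
    have hnorm : ‖((k.factorial : ℂ))‖ = (k.factorial : ℝ) := by
      simp [Complex.norm_natCast]
    rw [norm_div, norm_pow, hnorm]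
    gcongr
  have hexp : Complex.exp (a * t) = ∑' k : ℕ, (a * t) ^ k / k.factorial := by
    rw [Complex.exp_eq_exp_ℂ, NormedSpace.exp_eq_tsum_div]
  have hsplit := Summable.sum_add_tsum_nat_add (f := fun k : ℕ => (a * t) ^ k / k.factorial) n hsum
  have heval : (expPoly a n).eval t = ∑ k ∈ Finset.range n, (a * t) ^ k / k.factorial := by
    rw [expPoly_eval]
    exact Finset.sum_congr rfl fun k _ => by rw [mul_pow]
  rw [hexp, heval, ← hsplit]
  have : (∑ k ∈ Finset.range n, (a*t) ^ k / k.factorial)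
      + (∑' k : ℕ, (a*t) ^ (k + n) / (k + n).factorial)
      - (∑ k ∈ Finset.range n, (a*t) ^ k / k.factorial)
      = ∑' k : ℕ, (a*t) ^ (k + n) / (k + n).factorial := by ring
  rw [this]
  have hsumtail : Summable (fun k : ℕ => ‖(a*t) ^ (k + n) / ((k + n).factorial : ℂ)‖) := by
    have := hsum.norm.comp_injective (add_left_injective n)
    simpa [Function.comp_def] using this
  refine le_trans (norm_tsum_le_tsum_norm hsumtail) ?_
  apply Summable.tsum_le_tsum _ hsumtail
  · exact (Real.summable_pow_div_factorial c).comp_injective (add_left_injective n)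
  intro k
  have hnorm : ‖(((k + n).factorial : ℂ))‖ = ((k + n).factorial : ℝ) := by
    simp [Complex.norm_natCast]
  rw [norm_div, norm_pow, hnorm]
  gcongr

/-- For `H > 0`, continuous `f : [0,H] → ℂ`, and `ε > 0`, there is a
complex polynomial `P` with `|f(t) − P(t)| < ε` for all `t ∈ [0,H]` and `|P'(t)| ≥ 1` for
all `t ∈ [0,H]`. -/
theorem polynomial_approx_with_large_derivative
    (H : ℝ) (hH : 0 < H) (f : ℝ → ℂ) (hf : ContinuousOn f (Set.Icc 0 H))
    (ε : ℝ) (hε : 0 < ε) :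
    ∃ P : Polynomial ℂ,
      (∀ t ∈ Set.Icc (0:ℝ) H, ‖f t - P.eval (t : ℂ)‖ < ε) ∧
      (∀ t ∈ Set.Icc (0:ℝ) H, 1 ≤ ‖P.derivative.eval (t : ℂ)‖) := by
  classical
  -- Step 1: Weierstrass approximation of real and imaginary parts
  obtain ⟨p, hp⟩ := exists_polynomial_near_of_continuousOn 0 H (fun t => (f t).re)
    (Complex.continuous_re.comp_continuousOn hf) (ε/4) (by linarith)
  obtain ⟨q, hq⟩ := exists_polynomial_near_of_continuousOn 0 H (fun t => (f t).im)
    (Complex.continuous_im.comp_continuousOn hf) (ε/4) (by linarith)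
  set Q : Polynomial ℂ := p.map (algebraMap ℝ ℂ) + Polynomial.C Complex.I * q.map (algebraMap ℝ ℂ)
  have key : ∀ (r : Polynomial ℝ) (t : ℝ),
      (r.map (algebraMap ℝ ℂ)).eval (t : ℂ) = ((r.eval t : ℝ) : ℂ) := by
    intro r t
    rw [Polynomial.eval_map]
    exact Polynomial.eval₂_at_apply (algebraMap ℝ ℂ) t
  have hQeval : ∀ t : ℝ, Q.eval (t : ℂ) = ((p.eval t : ℝ) : ℂ) + Complex.I * ((q.eval t : ℝ) : ℂ) := by
    intro t
    simp [Q, key]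
  have hQ : ∀ t ∈ Set.Icc (0:ℝ) H, ‖f t - Q.eval (t : ℂ)‖ < ε/2 := by
    intro t ht
    rw [hQeval t]
    have h1 := hp t ht
    have h2 := hq t ht
    have : f t - (((p.eval t : ℝ) : ℂ) + Complex.I * ((q.eval t : ℝ) : ℂ))
        = (((f t).re - p.eval t : ℝ) : ℂ) + (((f t).im - q.eval t : ℝ) : ℂ) * Complex.I := by
      rw [Complex.ext_iff]
      simp
    rw [this]
    calc ‖_‖ ≤ ‖(((f t).re - p.eval t : ℝ) : ℂ)‖
          + ‖(((f t).im - q.eval t : ℝ) : ℂ) * Complex.I‖ :=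
            norm_add_le _ _
      _ = |(f t).re - p.eval t| + |(f t).im - q.eval t| := by
          rw [norm_mul, Complex.norm_I, mul_one, Complex.norm_real, Complex.norm_real, Real.norm_eq_abs,
              Real.norm_eq_abs]
      _ < ε/4 + ε/4 := by
          rw [abs_sub_comm ((f t).re), abs_sub_comm ((f t).im)]
          exact add_lt_add h1 h2
      _ = ε/2 := by ring
  -- Step 2: bound on |Q'|
  obtain ⟨M, hM⟩ : ∃ M : ℝ, ∀ t ∈ Set.Icc (0:ℝ) H,
      ‖Q.derivative.eval (t : ℂ)‖ ≤ M := by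
    have hc : ContinuousOn (fun t : ℝ => ‖Q.derivative.eval (t : ℂ)‖)
        (Set.Icc 0 H) := by
      apply Continuous.continuousOn
      exact continuous_norm.comp ((Q.derivative.continuous_aeval).comp
        Complex.continuous_ofReal)
    obtain ⟨C, hC⟩ := (isCompact_Icc).exists_bound_of_continuousOn hc
    exact ⟨C, fun t ht => le_trans (le_abs_self _) (by simpa using hC t ht)⟩
  have hM0 : 0 ≤ M := le_trans (norm_nonneg _) (hM 0 ⟨le_refl 0, le_of_lt hH⟩)
  -- Step 3: oscillating polynomial
  set δ : ℝ := ε/8 with hδdef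
  have hδ : 0 < δ := by positivity
  obtain ⟨N, hN1, hN2⟩ : ∃ N : ℝ, 0 ≤ N ∧ 2 * (M + 1) ≤ δ * N :=
    ⟨2 * (M + 1) / δ, by positivity, by rw [mul_div_cancel₀]; exact hδ.ne'⟩
  set a : ℂ := N * Complex.I with ha
  set c : ℝ := N * H with hcdef
  have hc0 : 0 ≤ c := by positivity
  -- pick truncation index
  have htail : Tendsto (fun m : ℕ => ∑' k : ℕ, c ^ (k + m) / (k + m).factorial)
      atTop (nhds 0) := tendsto_sum_nat_add (fun k => c ^ k / k.factorial)
  obtain ⟨n, hn⟩ : ∃ n : ℕ, ∀ m ≥ n, (∑' k : ℕ, c ^ (k + m) / (k + m).factorial) < 1/2 := by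
    have := (htail.eventually (eventually_lt_nhds (by norm_num : (0:ℝ) < 1/2)))
    exact eventually_atTop.mp this
  -- key abs facts
  have habs : ∀ t ∈ Set.Icc (0:ℝ) H, ‖a * t‖ ≤ c := by
    intro t ht
    rw [ha, hcdef]
    rw [norm_mul, norm_mul]
    simp only [Complex.norm_I, Complex.norm_real, Real.norm_eq_abs, mul_one]
    rw [abs_of_nonneg hN1, abs_of_nonneg ht.1]
    exact mul_le_mul_of_nonneg_left ht.2 hN1
  have hexpabs : ∀ t : ℝ, ‖Complex.exp (a * t)‖ = 1 := by
    intro t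
    rw [Complex.norm_exp]
    have : (a * t).re = 0 := by simp [ha]
    rw [this, Real.exp_zero]
  have habs_eq : ∀ z : ℂ, ‖z‖ = ‖z‖ := fun z => rfl
  refine ⟨Q + Polynomial.C (δ : ℂ) * expPoly a (n + 1), ?_, ?_⟩
  · -- approximation bound
    intro t ht
    have h1 := hQ t ht
    have h2 := expPoly_close a (n + 1) t c (habs t ht)
    have h3 := hn (n + 1) (Nat.le_succ n)
    set S : ℂ := (expPoly a (n+1)).eval (t : ℂ) with hS
    have hvS : ‖S‖ ≤ 3/2 := by
      have e : S = Complex.exp (a*t) - (Complex.exp (a*t) - S) := by ring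
      rw [e]
      refine le_trans (norm_sub_le _ _) ?_
      rw [hexpabs t]
      linarith [le_trans h2 h3.le]
    rw [Polynomial.eval_add, Polynomial.eval_mul, Polynomial.eval_C, ← hS]
    have e2 : f t - (Q.eval (t:ℂ) + (δ:ℂ) * S) = (f t - Q.eval (t:ℂ)) + (-((δ:ℂ) * S)) := by
      ring
    rw [e2]
    calc ‖(f t - Q.eval (t:ℂ)) + (-((δ:ℂ) * S))‖
        ≤ ‖f t - Q.eval (t:ℂ)‖ + ‖-((δ:ℂ) * S)‖ := norm_add_le _ _
      _ = ‖f t - Q.eval (t:ℂ)‖ + δ * ‖S‖ := by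
          rw [norm_neg, norm_mul, Complex.norm_real, Real.norm_eq_abs, abs_of_pos hδ]
      _ < ε/2 + δ * (3/2) := by
          refine add_lt_add_of_lt_of_le h1 ?_
          exact mul_le_mul_of_nonneg_left hvS hδ.le
      _ ≤ ε := by rw [hδdef]; linarith
  · -- derivative bound
    intro t ht
    have h2 := expPoly_close a n t c (habs t ht)
    have h3 := hn n (le_refl n)
    set S : ℂ := (expPoly a n).eval (t : ℂ) with hS
    have hvS : 1/2 ≤ ‖S‖ := by
      have hlow := norm_sub_norm_le (Complex.exp (a*t)) (Complex.exp (a*t) - S)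
      rw [show Complex.exp (a*t) - (Complex.exp (a*t) - S) = S from by ring] at hlow
      have h1 : ‖Complex.exp (a*t)‖ = 1 := by exact hexpabs t
      have h4 : ‖Complex.exp (a*t) - S‖ ≤ 1/2 := by
        exact le_trans h2 h3.le
      linarith
    have haN : ‖a‖ = N := by
      rw [ha, norm_mul, Complex.norm_I, Complex.norm_real, mul_one, Real.norm_eq_abs, abs_of_nonneg hN1]
    have hPd : (Q + Polynomial.C (δ:ℂ) * expPoly a (n+1)).derivative
        = Q.derivative + Polynomial.C ((δ : ℂ) * a) * expPoly a n := by
      rw [Polynomial.derivative_add, Polynomial.derivative_C_mul, expPoly_derivative,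
        ← mul_assoc, ← Polynomial.C_mul]
    rw [hPd, Polynomial.eval_add, Polynomial.eval_mul, Polynomial.eval_C, ← hS]
    have hbig : δ * N * (1/2) ≤ ‖(δ:ℂ) * a * S‖ := by
      rw [norm_mul, norm_mul, Complex.norm_real, Real.norm_eq_abs, abs_of_pos hδ, haN]
      have h1 : (0:ℝ) ≤ δ * N := by positivity
      nlinarith [hvS, h1]
    have htri : ‖(δ:ℂ) * a * S‖ - ‖Q.derivative.eval (t:ℂ)‖
        ≤ ‖Q.derivative.eval (t:ℂ) + (δ:ℂ) * a * S‖ := by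
      have e : (δ:ℂ) * a * S = (Q.derivative.eval (t:ℂ) + (δ:ℂ) * a * S)
          - Q.derivative.eval (t:ℂ) := by ring
      calc ‖(δ:ℂ) * a * S‖ - ‖Q.derivative.eval (t:ℂ)‖
          = ‖(Q.derivative.eval (t:ℂ) + (δ:ℂ) * a * S) - Q.derivative.eval (t:ℂ)‖
            - ‖Q.derivative.eval (t:ℂ)‖ := by rw [← e]
        _ ≤ _ := by
            have := norm_sub_le (Q.derivative.eval (t:ℂ) + (δ:ℂ) * a * S)
              (Q.derivative.eval (t:ℂ))
            linarith
    have hQd := hM t ht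
    have hfinal : M + 1 ≤ δ * N * (1/2) := by linarith
    linarith
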